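/- arXiv:1201.6503 — 3 statements merged into one kernel-verified Lean document; each statement's English description precedes it below -/
import Mathlib

section
/- Let g be C¹ on (-ε,ε) with g(0)=0 and g'(0)=λ²>0, G(x)=∫₀ˣ g(u)du, and X defined by X(x)²=2G(x), x·X(x)>0 for x≠0. Then X is C¹ in a neighborhood of 0 and X'(0)=λ. -/
open Set Filter Topology Metric

/-!
Since `g(x)/x → λ²`, l'Hôpital gives `2G(x)/x² → λ²`; as `(X(x)/x)² = 2G(x)/x²` and
`X(x)/x > 0`, the difference quotient `X(x)/x` tends to `λ`, so `X'(0) = λ`. Away from `0`,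
`X = ±√(2G)` is differentiable with `X' = g/X = (g(x)/x)/(X(x)/x)`, which tends to `λ²/λ = λ`.
-/

theorem hasDerivAt_zero_iff_tendsto_div {f : ℝ → ℝ} {L : ℝ} (hf : f 0 = 0) :
    HasDerivAt f L 0 ↔ Tendsto (fun x => f x / x) (𝓝[≠] 0) (𝓝 L) := by
  simp [hasDerivAt_iff_tendsto_slope_zero, hf, div_eq_inv_mul]

theorem hasDerivAt_integral_of_continuousOn {g : ℝ → ℝ} {s : Set ℝ} {a x : ℝ} (hs : IsOpen s)
    (hs' : s.OrdConnected) (hg : ContinuousOn g s) (ha : a ∈ s) (hx : x ∈ s) :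
    HasDerivAt (fun y => ∫ u in a..y, g u) (g x) x :=
  intervalIntegral.integral_hasDerivAt_right
    ((hg.mono (hs'.uIcc_subset ha hx)).intervalIntegrable)
    (hg.stronglyMeasurableAtFilter hs x hx) (hg.continuousAt (hs.mem_nhds hx))

theorem tendsto_two_mul_div_sq_of_hasDerivAt {F f : ℝ → ℝ} {L : ℝ}
    (hF : ∀ᶠ x in 𝓝 0, HasDerivAt F (f x) x) (hF0 : F 0 = 0)
    (hf : Tendsto (fun x => f x / x) (𝓝[≠] 0) (𝓝 L)) :
    Tendsto (fun x => 2 * F x / x ^ 2) (𝓝[≠] 0) (𝓝 L) := by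
  refine HasDerivAt.lhopital_zero_nhdsNE (f' := fun x => 2 * f x) (g' := fun x => 2 * x)
    ?_ ?_ ?_ ?_ ?_ ?_
  · exact eventually_nhdsWithin_of_eventually_nhds (hF.mono fun x hx => hx.const_mul 2)
  · exact Eventually.of_forall fun x => by simpa using hasDerivAt_pow 2 x
  · filter_upwards [self_mem_nhdsWithin] with x hx using mul_ne_zero two_ne_zero hx
  · have := (hF.self_of_nhds.continuousAt.const_mul 2).tendsto
    rw [hF0, mul_zero] at this
    exact this.mono_left nhdsWithin_le_nhds
  · exact tendsto_nhdsWithin_of_tendsto_nhds (by simpa using (continuous_pow 2).tendsto (0 : ℝ))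
  · exact hf.congr fun x => (mul_div_mul_left _ _ two_ne_zero).symm

theorem HasDerivAt.of_sq_eq_of_pos {F X : ℝ → ℝ} {F' x : ℝ} (hF : HasDerivAt F F' x)
    (hsq : ∀ᶠ y in 𝓝 x, X y ^ 2 = F y) (hpos : ∀ᶠ y in 𝓝 x, 0 < X y) :
    HasDerivAt X (F' / (2 * X x)) x := by
  have hX : X =ᶠ[𝓝 x] fun y => √(F y) := by
    filter_upwards [hsq, hpos] with y hy hy'
    rw [← hy, Real.sqrt_sq hy'.le]
  have hFx : F x ≠ 0 := by
    rw [← hsq.self_of_nhds]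
    exact pow_ne_zero 2 hpos.self_of_nhds.ne'
  rw [hX.eq_of_nhds]
  exact (hF.sqrt hFx).congr_of_eventuallyEq hX

theorem HasDerivAt.of_sq_eq_of_mul_pos {F X : ℝ → ℝ} {F' x : ℝ} (hF : HasDerivAt F F' x)
    (hx : x ≠ 0) (hsq : ∀ᶠ y in 𝓝 x, X y ^ 2 = F y) (hsgn : ∀ᶠ y in 𝓝 x, 0 < y * X y) :
    HasDerivAt X (F' / (2 * X x)) x := by
  rcases hx.lt_or_gt with hneg | hpos
  · have hXneg : ∀ᶠ y in 𝓝 x, 0 < (-X) y := by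
      filter_upwards [hsgn, eventually_lt_nhds hneg] with y h1 h2
      simp only [Pi.neg_apply]
      nlinarith
    have := (hF.of_sq_eq_of_pos (by simpa only [Pi.neg_apply, neg_sq] using hsq) hXneg).neg
    simpa [neg_neg, mul_neg, div_neg] using this
  · refine hF.of_sq_eq_of_pos hsq ?_
    filter_upwards [hsgn, eventually_gt_nhds hpos] with y h1 h2
    nlinarith

theorem tendsto_div_self_of_sq_eq {F X : ℝ → ℝ} {c : ℝ} (hc : 0 ≤ c)
    (hsq : ∀ᶠ x in 𝓝 0, X x ^ 2 = F x) (hsgn : ∀ᶠ x in 𝓝[≠] 0, 0 < x * X x)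
    (hF : Tendsto (fun x => F x / x ^ 2) (𝓝[≠] 0) (𝓝 (c ^ 2))) :
    Tendsto (fun x => X x / x) (𝓝[≠] 0) (𝓝 c) := by
  rw [← Real.sqrt_sq hc]
  refine hF.sqrt.congr' ?_
  filter_upwards [eventually_nhdsWithin_of_eventually_nhds hsq, hsgn, self_mem_nhdsWithin]
    with x hx hx' (hx0 : x ≠ 0)
  have hpos : 0 ≤ X x / x := by
    rw [show X x / x = x * X x / x ^ 2 by field_simp]
    exact div_nonneg hx'.le (sq_nonneg x)
  rw [← hx, ← div_pow, Real.sqrt_sq hpos]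

theorem eventually_hasDerivAt_of_sq_eq {F F' X : ℝ → ℝ}
    (hF : ∀ᶠ x in 𝓝 0, HasDerivAt F (F' x) x) (hsq : ∀ᶠ x in 𝓝 0, X x ^ 2 = F x)
    (hsgn : ∀ᶠ x in 𝓝 0, x ≠ 0 → 0 < x * X x) :
    ∀ᶠ x in 𝓝[≠] 0, HasDerivAt X (F' x / (2 * X x)) x := by
  filter_upwards [eventually_nhdsWithin_of_eventually_nhds (hF.and (hsq.and hsgn).eventually_nhds),
    self_mem_nhdsWithin] with x ⟨hFx, hx⟩ (hx0 : x ≠ 0)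
  exact hFx.of_sq_eq_of_mul_pos hx0 (hx.mono fun y hy => hy.1)
    ((hx.and (eventually_ne_nhds hx0)).mono fun y hy => hy.1.2 hy.2)

theorem exists_contDiffOn_ball_of_hasDerivAt {f F : ℝ → ℝ} {a : ℝ}
    (hd : ∀ᶠ x in 𝓝 a, HasDerivAt f (F x) x) (hc : ∀ᶠ x in 𝓝 a, ContinuousAt F x) :
    ∃ δ > 0, ContDiffOn ℝ 1 f (ball a δ) := by
  obtain ⟨δ, hδ, hball⟩ := eventually_nhds_iff_ball.mp (hd.and hc)
  refine ⟨δ, hδ, (contDiffOn_one_iff_derivWithin isOpen_ball.uniqueDiffOn).2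
    ⟨fun x hx => (hball x hx).1.differentiableAt.differentiableWithinAt, ?_⟩⟩
  refine ContinuousOn.congr (f := F) (fun x hx => (hball x hx).2.continuousWithinAt) ?_
  intro x hx
  rw [derivWithin_of_isOpen isOpen_ball hx, (hball x hx).1.deriv]

theorem exists_contDiffOn_ball_of_tendsto_deriv {f F : ℝ → ℝ} {a L : ℝ}
    (hd : ∀ᶠ x in 𝓝[≠] a, HasDerivAt f (F x) x) (hc : ∀ᶠ x in 𝓝[≠] a, ContinuousAt F x)
    (ha : HasDerivAt f L a) (hlim : Tendsto F (𝓝[≠] a) (𝓝 L)) :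
    ∃ δ > 0, ContDiffOn ℝ 1 f (ball a δ) := by
  classical
  rw [eventually_nhdsWithin_iff] at hd hc
  refine exists_contDiffOn_ball_of_hasDerivAt (F := Function.update F a L) ?_ ?_
  · filter_upwards [hd] with x hx
    rcases eq_or_ne x a with rfl | hne
    · simpa using ha
    · simpa [Function.update_of_ne hne] using hx hne
  · filter_upwards [hc] with x hx
    rcases eq_or_ne x a with rfl | hne
    · exact continuousAt_update_same.mpr hlim
    · exact (continuousAt_update_of_ne hne).mpr (hx hne)

theorem stmt_1_general (ε lam : ℝ) (hε : 0 < ε) (hlam : 0 < lam)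
    (g G X : ℝ → ℝ)
    (hg : ContDiffOn ℝ 1 g (Ioo (-ε) ε))
    (hg0 : g 0 = 0) (hg'0 : deriv g 0 = lam ^ 2)
    (hG : ∀ x, G x = ∫ u in (0:ℝ)..x, g u)
    (hX2 : ∀ᶠ x in nhds (0:ℝ), (X x) ^ 2 = 2 * G x)
    (hXsgn : ∀ᶠ x in nhds (0:ℝ), x ≠ 0 → 0 < x * X x) :
    ∃ δ > 0, ContDiffOn ℝ 1 X (Ioo (-δ) δ) ∧ deriv X 0 = lam := by
  have hU : Ioo (-ε) ε ∈ 𝓝 (0 : ℝ) := Ioo_mem_nhds (by linarith) hε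
  have hgc : ∀ᶠ x in 𝓝 0, ContinuousAt g x :=
    eventually_mem_nhds_iff.mpr hU |>.mono fun _ => hg.continuousOn.continuousAt
  have hGd : ∀ᶠ x in 𝓝 0, HasDerivAt G (g x) x := by
    filter_upwards [hU] with x hx
    rw [funext hG]
    exact hasDerivAt_integral_of_continuousOn isOpen_Ioo ordConnected_Ioo hg.continuousOn
      (mem_of_mem_nhds hU) hx
  have hG0 : G 0 = 0 := by simp [hG]
  have hX0 : X 0 = 0 := by simpa [hG0] using hX2.self_of_nhds
  have hg_slope : Tendsto (fun x => g x / x) (𝓝[≠] 0) (𝓝 (lam ^ 2)) := by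
    rw [← hasDerivAt_zero_iff_tendsto_div hg0, ← hg'0]
    exact ((hg.contDiffAt hU).differentiableAt one_ne_zero).hasDerivAt
  have hsgn : ∀ᶠ x in 𝓝[≠] 0, 0 < x * X x := eventually_nhdsWithin_iff.mpr hXsgn
  have hX_slope : Tendsto (fun x => X x / x) (𝓝[≠] 0) (𝓝 lam) :=
    tendsto_div_self_of_sq_eq hlam.le hX2 hsgn (tendsto_two_mul_div_sq_of_hasDerivAt hGd hG0 hg_slope)
  have hX'0 : HasDerivAt X lam 0 := (hasDerivAt_zero_iff_tendsto_div hX0).2 hX_slope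
  have hX' : ∀ᶠ x in 𝓝[≠] 0, HasDerivAt X (g x / X x) x := by
    simpa only [mul_div_mul_left _ _ (two_ne_zero (α := ℝ))] using
      eventually_hasDerivAt_of_sq_eq (hGd.mono fun x hx => hx.const_mul 2) hX2 hXsgn
  have hg_div_X : Tendsto (fun x => g x / X x) (𝓝[≠] 0) (𝓝 lam) := by
    have hq := hg_slope.div hX_slope hlam.ne'
    rw [sq, mul_div_cancel_right₀ _ hlam.ne'] at hq
    refine hq.congr' ?_
    filter_upwards [self_mem_nhdsWithin] with x (hx0 : x ≠ 0)
    exact div_div_div_cancel_right₀ hx0 _ _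
  have hcont : ∀ᶠ x in 𝓝[≠] 0, ContinuousAt (fun x => g x / X x) x := by
    filter_upwards [hX', eventually_nhdsWithin_of_eventually_nhds hgc, hsgn] with x hXx hgx hx
    exact hgx.div hXx.continuousAt (right_ne_zero_of_mul hx.ne')
  obtain ⟨δ, hδ, hC1⟩ := exists_contDiffOn_ball_of_tendsto_deriv hX' hcont hX'0 hg_div_X
  exact ⟨δ, hδ, Real.ball_zero_eq_Ioo δ ▸ hC1, hX'0.deriv⟩

theorem stmt_1 (ε lam : ℝ) (hε : 0 < ε) (hlam : 0 < lam)
    (g G X : ℝ → ℝ)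
    (hg : ContDiffOn ℝ 1 g (Ioo (-ε) ε))
    (hg0 : g 0 = 0) (hg'0 : deriv g 0 = lam ^ 2)
    (hG : ∀ x, G x = ∫ u in (0:ℝ)..x, g u)
    (hXcont : ∀ᶠ x in nhds (0:ℝ), ContinuousAt X x)
    (hX2 : ∀ᶠ x in nhds (0:ℝ), (X x) ^ 2 = 2 * G x)
    (hXsgn : ∀ᶠ x in nhds (0:ℝ), x ≠ 0 → 0 < x * X x) :
    ∃ δ > 0, ContDiffOn ℝ 1 X (Ioo (-δ) δ) ∧ deriv X 0 = lam :=
  stmt_1_general ε lam hε hlam g G X hg hg0 hg'0 hG hX2 hXsgn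
end

section
/- Let g be C¹ near 0, g(0)=0, g'(0)=ν²>0, and suppose the Urabe condition g(x)=λ·X(x)/(1+h(X(x))) holds for some λ>0 and some odd continuous function h with h(0)=0, where X²=2G, xX>0 for x≠0. Then ν=λ, i.e. necessarily g'(0)=λ². -/
open Set Filter Topology

/-!
Since `X² = 2G` and `G(x) ~ ν² x² / 2` (L'Hôpital), the sign condition forces `X(x) / x → ν`;
together with `g(x) / x → ν²` this gives `g(x) / X(x) → ν`. On the other hand `X(x) → 0` and
`h(0) = 0`, so the Urabe relation gives `g(x) / X(x) = λ / (1 + h(X(x))) → λ`.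
-/

theorem hasDerivAt_integral_of_continuousOn_Ioo {E : Type*} [NormedAddCommGroup E]
    [NormedSpace ℝ E] [CompleteSpace E] {f : ℝ → E} {a b c x : ℝ}
    (hf : ContinuousOn f (Ioo a b)) (hc : c ∈ Ioo a b) (hx : x ∈ Ioo a b) :
    HasDerivAt (fun y => ∫ u in c..y, f u) (f x) x :=
  intervalIntegral.integral_hasDerivAt_right
    ((hf.mono (ordConnected_Ioo.uIcc_subset hc hx)).intervalIntegrable)
    (hf.stronglyMeasurableAtFilter isOpen_Ioo x hx) (hf.continuousAt (isOpen_Ioo.mem_nhds hx))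

theorem tendsto_div_nhdsNE_zero_of_hasDerivAt {f : ℝ → ℝ} {c : ℝ} (hf : HasDerivAt f c 0)
    (hf0 : f 0 = 0) : Tendsto (fun x => f x / x) (𝓝[≠] 0) (𝓝 c) := by
  simpa [hf0, div_eq_inv_mul] using hf.tendsto_slope_zero

theorem tendsto_div_sq_nhdsNE_zero_of_hasDerivAt {F f : ℝ → ℝ} {c : ℝ}
    (hF : ∀ᶠ x in 𝓝 0, HasDerivAt F (f x) x) (hF0 : F 0 = 0) (hf : HasDerivAt f c 0)
    (hf0 : f 0 = 0) : Tendsto (fun x => F x / x ^ 2) (𝓝[≠] 0) (𝓝 (c / 2)) := by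
  refine HasDerivAt.lhopital_zero_nhdsNE (f' := f) (g' := fun x => 2 * x)
    (eventually_nhdsWithin_of_eventually_nhds hF) ?_ ?_ ?_ ?_ ?_
  · exact Eventually.of_forall fun x => by simpa using hasDerivAt_pow 2 x
  · filter_upwards [self_mem_nhdsWithin] with x hx using mul_ne_zero two_ne_zero hx
  · simpa [hF0] using hF.self_of_nhds.continuousAt.tendsto.mono_left nhdsWithin_le_nhds
  · simpa using ((continuous_pow 2).tendsto (0 : ℝ)).mono_left nhdsWithin_le_nhds
  · refine ((tendsto_div_nhdsNE_zero_of_hasDerivAt hf hf0).div_const 2).congr fun x => ?_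
    rw [div_div, mul_comm]

theorem tendsto_of_tendsto_sq {α : Type*} {l : Filter α} {u : α → ℝ} {a : ℝ} (ha : 0 ≤ a)
    (hu : ∀ᶠ x in l, 0 ≤ u x) (h : Tendsto (fun x => u x ^ 2) l (𝓝 (a ^ 2))) :
    Tendsto u l (𝓝 a) := by
  have := (Real.continuous_sqrt.tendsto _).comp h
  rw [Function.comp_def, Real.sqrt_sq ha] at this
  refine this.congr' ?_
  filter_upwards [hu] with x hx using Real.sqrt_sq hx

theorem tendsto_div_nhdsNE_zero_of_sq_eq {X Q : ℝ → ℝ} {ν : ℝ} (hν : 0 ≤ ν)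
    (hQ : Tendsto (fun x => Q x / x ^ 2) (𝓝[≠] 0) (𝓝 (ν ^ 2)))
    (hX2 : ∀ᶠ x in 𝓝 0, X x ^ 2 = Q x) (hXsgn : ∀ᶠ x in 𝓝 0, x ≠ 0 → 0 < x * X x) :
    Tendsto (fun x => X x / x) (𝓝[≠] 0) (𝓝 ν) := by
  refine tendsto_of_tendsto_sq hν ?_ (hQ.congr' ?_)
  · filter_upwards [eventually_nhdsWithin_of_eventually_nhds hXsgn, self_mem_nhdsWithin]
      with x hsgn hx
    have hx0 : (x : ℝ) ≠ 0 := hx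
    rw [show X x / x = x * X x / x ^ 2 by field_simp]
    exact div_nonneg (hsgn hx).le (sq_nonneg x)
  · filter_upwards [eventually_nhdsWithin_of_eventually_nhds hX2] with x hx
    rw [div_pow, hx]

theorem tendsto_div_of_tendsto_div_nhdsNE_zero {g X : ℝ → ℝ} {a b : ℝ}
    (hg : Tendsto (fun x => g x / x) (𝓝[≠] 0) (𝓝 a))
    (hX : Tendsto (fun x => X x / x) (𝓝[≠] 0) (𝓝 b)) (hb : b ≠ 0) :
    Tendsto (fun x => g x / X x) (𝓝[≠] 0) (𝓝 (a / b)) := by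
  refine (hg.div hX hb).congr' ?_
  filter_upwards [self_mem_nhdsWithin] with x hx using div_div_div_cancel_right₀ hx _ _

theorem tendsto_zero_of_tendsto_div_nhdsNE_zero {X : ℝ → ℝ} {b : ℝ}
    (hX : Tendsto (fun x => X x / x) (𝓝[≠] 0) (𝓝 b)) : Tendsto X (𝓝[≠] 0) (𝓝 0) := by
  have := hX.mul (tendsto_nhdsWithin_of_tendsto_nhds tendsto_id)
  rw [mul_zero] at this
  refine this.congr' ?_
  filter_upwards [self_mem_nhdsWithin] with x hx using div_mul_cancel₀ (X x) hx

theorem tendsto_div_of_eq_mul_div {α : Type*} {l : Filter α} {g X : α → ℝ} {h : ℝ → ℝ}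
    {lam : ℝ} (hX : Tendsto X l (𝓝 0)) (hh : ContinuousAt h 0) (hh0 : h 0 = 0)
    (hXne : ∀ᶠ x in l, X x ≠ 0) (hU : ∀ᶠ x in l, g x = lam * X x / (1 + h (X x))) :
    Tendsto (fun x => g x / X x) l (𝓝 lam) := by
  have hden : Tendsto (fun x => 1 + h (X x)) l (𝓝 1) := by
    simpa [hh0] using (hh.tendsto.comp hX).const_add 1
  have hquot : Tendsto (fun x => lam / (1 + h (X x))) l (𝓝 (lam / 1)) :=
    tendsto_const_nhds.div hden one_ne_zero
  refine (div_one lam ▸ hquot).congr' ?_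
  filter_upwards [hXne, hU] with x hx hU
  rw [hU, mul_div_right_comm, mul_div_assoc, div_self hx, mul_one]

theorem stmt_14_general (ε ν lam : ℝ) (hε : 0 < ε) (hν : 0 < ν)
    (g G X h : ℝ → ℝ)
    (hg : ContDiffOn ℝ 1 g (Ioo (-ε) ε))
    (hg0 : g 0 = 0) (hg'0 : deriv g 0 = ν ^ 2)
    (hG : ∀ x, G x = ∫ u in (0:ℝ)..x, g u)
    (hX2 : ∀ᶠ x in nhds (0:ℝ), (X x) ^ 2 = 2 * G x)
    (hXsgn : ∀ᶠ x in nhds (0:ℝ), x ≠ 0 → 0 < x * X x)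
    (hhcont : ∀ᶠ s in nhds (0:ℝ), ContinuousAt h s)
    (hhodd : ∀ᶠ s in nhds (0:ℝ), h (-s) = -h s)
    (hUrabe : ∀ᶠ x in nhds (0:ℝ), g x = lam * X x / (1 + h (X x))) :
    ν = lam := by
  have hIoo : Ioo (-ε) ε ∈ 𝓝 (0:ℝ) := Ioo_mem_nhds (neg_lt_zero.mpr hε) hε
  have hgd : HasDerivAt g (ν ^ 2) 0 :=
    hg'0 ▸ ((hg.contDiffAt hIoo).differentiableAt one_ne_zero).hasDerivAt
  have hGd : ∀ᶠ x in 𝓝 0, HasDerivAt (fun x => 2 * G x) (2 * g x) x := by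
    filter_upwards [hIoo] with x hx
    simpa only [← hG] using ((hasDerivAt_integral_of_continuousOn_Ioo hg.continuousOn
      (mem_of_mem_nhds hIoo) hx).const_mul 2)
  have hGx : Tendsto (fun x => 2 * G x / x ^ 2) (𝓝[≠] 0) (𝓝 (ν ^ 2)) := by
    simpa using tendsto_div_sq_nhdsNE_zero_of_hasDerivAt hGd (by simp [hG])
      (hgd.const_mul 2) (by simp [hg0])
  have hXx : Tendsto (fun x => X x / x) (𝓝[≠] 0) (𝓝 ν) :=
    tendsto_div_nhdsNE_zero_of_sq_eq hν.le hGx hX2 hXsgn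
  have hXne : ∀ᶠ x in 𝓝[≠] (0:ℝ), X x ≠ 0 := by
    filter_upwards [eventually_nhdsWithin_of_eventually_nhds hXsgn, self_mem_nhdsWithin]
      with x hsgn hx hX0
    exact (hsgn hx).ne' (by simp [hX0])
  have hh0 : h 0 = 0 := by
    have := hhodd.self_of_nhds
    rw [neg_zero] at this
    linarith
  have hν' : Tendsto (fun x => g x / X x) (𝓝[≠] 0) (𝓝 ν) := by
    simpa [sq, hν.ne'] using tendsto_div_of_tendsto_div_nhdsNE_zero
      (tendsto_div_nhdsNE_zero_of_hasDerivAt hgd hg0) hXx hν.ne'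
  exact tendsto_nhds_unique hν' (tendsto_div_of_eq_mul_div
    (tendsto_zero_of_tendsto_div_nhdsNE_zero hXx) hhcont.self_of_nhds hh0 hXne
    (eventually_nhdsWithin_of_eventually_nhds hUrabe))

theorem stmt_14 (ε ν lam : ℝ) (hε : 0 < ε) (hν : 0 < ν) (hlam : 0 < lam)
    (g G X h : ℝ → ℝ)
    (hg : ContDiffOn ℝ 1 g (Ioo (-ε) ε))
    (hg0 : g 0 = 0) (hg'0 : deriv g 0 = ν ^ 2)
    (hG : ∀ x, G x = ∫ u in (0:ℝ)..x, g u)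
    (hXcont : ∀ᶠ x in nhds (0:ℝ), ContinuousAt X x)
    (hX2 : ∀ᶠ x in nhds (0:ℝ), (X x) ^ 2 = 2 * G x)
    (hXsgn : ∀ᶠ x in nhds (0:ℝ), x ≠ 0 → 0 < x * X x)
    (hhcont : ∀ᶠ s in nhds (0:ℝ), ContinuousAt h s)
    (hhodd : ∀ᶠ s in nhds (0:ℝ), h (-s) = -h s)
    (hUrabe : ∀ᶠ x in nhds (0:ℝ), g x = lam * X x / (1 + h (X x))) :
    ν = lam :=
  stmt_14_general ε ν lam hε hν g G X h hg hg0 hg'0 hG hX2 hXsgn hhcont hhodd hUrabe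
end

section
/- Let g₁,g₂ be two C¹ solutions near 0 of the Chouikha equations with continuous data f₁,f₂ respectively, both with g_i(0)=0 and g_i'(0)=λ². If g₁=g₂ on some neighborhood of 0, then f₁=f₂ on some interval [0,η], η>0. -/
open Set Filter

theorem stmt_17 (ε δ lam : ℝ) (hε : 0 < ε) (hδ : 0 < δ) (hlam : 0 < lam)
    (f₁ f₂ g₁ g₂ : ℝ → ℝ)
    (hf₁ : ContDiffOn ℝ 1 f₁ (Icc 0 ε)) (hf₂ : ContDiffOn ℝ 1 f₂ (Icc 0 ε))
    (hg₁ : ContDiffOn ℝ 1 g₁ (Ioo (-δ) δ)) (hg₂ : ContDiffOn ℝ 1 g₂ (Ioo (-δ) δ))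
    (hg₁0 : g₁ 0 = 0) (hg₂0 : g₂ 0 = 0)
    (hg₁' : deriv g₁ 0 = lam ^ 2) (hg₂' : deriv g₂ 0 = lam ^ 2)
    (hC₁ : ∀ x ∈ Ioo (-δ) δ, x ≠ 0 →
      HasDerivAt (fun y => (∫ u in (0:ℝ)..y, g₁ u) / (g₁ y) ^ 2)
        (f₁ (∫ u in (0:ℝ)..x, g₁ u)) x)
    (hC₂ : ∀ x ∈ Ioo (-δ) δ, x ≠ 0 →
      HasDerivAt (fun y => (∫ u in (0:ℝ)..y, g₂ u) / (g₂ y) ^ 2)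
        (f₂ (∫ u in (0:ℝ)..x, g₂ u)) x)
    (heq : ∀ᶠ x in nhds (0:ℝ), g₁ x = g₂ x) :
    ∃ η > 0, EqOn f₁ f₂ (Icc 0 η) := by
  have hopen : IsOpen (Ioo (-δ) δ) := isOpen_Ioo
  have h0mem : (0:ℝ) ∈ Ioo (-δ) δ := by constructor <;> linarith
  -- continuity of deriv g₁ near 0
  have hder_cont : ContinuousOn (deriv g₁) (Ioo (-δ) δ) :=
    hg₁.continuousOn_deriv_of_isOpen hopen le_rfl
  have hca : ContinuousAt (deriv g₁) 0 :=
    hder_cont.continuousAt (hopen.mem_nhds h0mem)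
  have hpos : ∀ᶠ x in nhds (0:ℝ), 0 < deriv g₁ x := by
    have h : (0:ℝ) < deriv g₁ 0 := by rw [hg₁']; positivity
    exact hca.eventually (eventually_gt_nhds h)
  have hcomb : ∀ᶠ x in nhds (0:ℝ),
      0 < deriv g₁ x ∧ g₁ x = g₂ x ∧ x ∈ Ioo (-δ) δ := by
    filter_upwards [hpos, heq, hopen.eventually_mem h0mem] with x h1 h2 h3
    exact ⟨h1, h2, h3⟩
  obtain ⟨r0, hr0pos, hr0⟩ := Metric.eventually_nhds_iff.mp hcomb
  have key : ∀ x ∈ Ioo (-r0) r0,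
      0 < deriv g₁ x ∧ g₁ x = g₂ x ∧ x ∈ Ioo (-δ) δ := by
    intro x hx
    apply hr0
    rw [Real.dist_eq, sub_zero, abs_lt]
    exact ⟨hx.1, hx.2⟩
  have hsub : Ioo (-r0) r0 ⊆ Ioo (-δ) δ := fun y hy => (key y hy).2.2
  have h0r : (0:ℝ) ∈ Ioo (-r0) r0 := by constructor <;> linarith
  -- g₁ strictly monotone on Ioo (-r0) r0
  have hmono : StrictMonoOn g₁ (Ioo (-r0) r0) := by
    apply strictMonoOn_of_deriv_pos (convex_Ioo _ _)
      (hg₁.continuousOn.mono hsub)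
    intro x hx
    rw [interior_Ioo] at hx
    exact (key x hx).1
  have hg1pos : ∀ x ∈ Ioo (0:ℝ) r0, 0 < g₁ x := by
    intro x hx
    have := hmono h0r ⟨by linarith [hx.1], hx.2⟩ hx.1
    rwa [hg₁0] at this
  set G : ℝ → ℝ := fun x => ∫ u in (0:ℝ)..x, g₁ u with hGdef
  have hGderiv : ∀ x ∈ Ioo (-r0) r0, HasDerivAt G (g₁ x) x := by
    intro x hx
    have hcont : ContinuousOn g₁ (Ioo (-δ) δ) := hg₁.continuousOn
    have huIcc : uIcc (0:ℝ) x ⊆ Ioo (-δ) δ :=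
      (ordConnected_Ioo).uIcc_subset h0mem (hsub hx)
    refine intervalIntegral.integral_hasDerivAt_right
      ((hcont.mono huIcc).intervalIntegrable ) ?_ ?_
    · exact hcont.stronglyMeasurableAtFilter hopen x (hsub hx)
    · exact hcont.continuousAt (hopen.mem_nhds (hsub hx))
  set r : ℝ := r0 / 2 with hrdef
  have hrpos : 0 < r := by positivity
  have hIccsub : Icc (0:ℝ) r ⊆ Ioo (-r0) r0 := by
    intro x hx
    constructor
    · linarith [hx.1]
    · have := hx.2; simp only [hrdef] at this; linarith
  have hGcont : ContinuousOn G (Icc 0 r) := fun x hx =>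
    (hGderiv x (hIccsub hx)).continuousAt.continuousWithinAt
  have hGmono : StrictMonoOn G (Icc 0 r) := by
    apply strictMonoOn_of_deriv_pos (convex_Icc _ _) hGcont
    intro x hx
    rw [interior_Icc] at hx
    rw [(hGderiv x (hIccsub ⟨hx.1.le, hx.2.le⟩)).deriv]
    exact hg1pos x ⟨hx.1, by have := hx.2; simp only [hrdef] at this; linarith⟩
  have hG0 : G 0 = 0 := intervalIntegral.integral_same
  have hGr : 0 < G r := by
    have := hGmono (left_mem_Icc.mpr hrpos.le) (right_mem_Icc.mpr hrpos.le) hrpos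
    rwa [hG0] at this
  -- pointwise key identity
  have hkey : ∀ x ∈ Ioo (0:ℝ) r0, f₁ (G x) = f₂ (G x) := by
    intro x hx
    have hxIoo : x ∈ Ioo (-r0) r0 := ⟨by linarith [hx.1], hx.2⟩
    have hxδ : x ∈ Ioo (-δ) δ := hsub hxIoo
    have h1 := hC₁ x hxδ (ne_of_gt hx.1)
    have h2 := hC₂ x hxδ (ne_of_gt hx.1)
    have hint : ∀ y ∈ Ioo (-r0) r0,
        (∫ u in (0:ℝ)..y, g₂ u) = ∫ u in (0:ℝ)..y, g₁ u := by
      intro y hy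
      refine intervalIntegral.integral_congr fun u hu => ?_
      exact ((key u ((ordConnected_Ioo).uIcc_subset h0r hy hu)).2.1).symm
    have hEq : ∀ᶠ y in nhds x,
        (fun y => (∫ u in (0:ℝ)..y, g₁ u) / (g₁ y) ^ 2) y =
        (fun y => (∫ u in (0:ℝ)..y, g₂ u) / (g₂ y) ^ 2) y := by
      filter_upwards [isOpen_Ioo.eventually_mem hxIoo] with y hy
      simp only [hint y hy, (key y hy).2.1]
    have h2' : HasDerivAt (fun y => (∫ u in (0:ℝ)..y, g₁ u) / (g₁ y) ^ 2)
        (f₂ (∫ u in (0:ℝ)..x, g₂ u)) x := h2.congr_of_eventuallyEq hEq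
    have := h1.unique h2'
    rwa [hint x hxIoo] at this
  -- f₁ = f₂ on (0, G r]
  have hIoc : ∀ t ∈ Ioc (0:ℝ) (G r), f₁ t = f₂ t := by
    intro t ht
    have hmem : t ∈ G '' Ioc 0 r := by
      apply intermediate_value_Ioc hrpos.le hGcont
      rwa [hG0]
    obtain ⟨x, hx, rfl⟩ := hmem
    exact hkey x ⟨hx.1, lt_of_le_of_lt hx.2 (by simp only [hrdef]; linarith)⟩
  set η : ℝ := min (G r) ε with hηdef
  have hηpos : 0 < η := lt_min hGr hε
  -- value at 0 via continuity
  have h0ε : (0:ℝ) ∈ Icc 0 ε := ⟨le_rfl, hε.le⟩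
  have hsubη : Ioc (0:ℝ) η ⊆ Icc 0 ε := fun t ht =>
    ⟨ht.1.le, le_trans ht.2 (min_le_right _ _)⟩
  have ht1 : Tendsto f₁ (nhdsWithin 0 (Ioc (0:ℝ) η)) (nhds (f₁ 0)) :=
    (hf₁.continuousOn 0 h0ε).mono_left (nhdsWithin_mono 0 hsubη)
  have ht2 : Tendsto f₂ (nhdsWithin 0 (Ioc (0:ℝ) η)) (nhds (f₂ 0)) :=
    (hf₂.continuousOn 0 h0ε).mono_left (nhdsWithin_mono 0 hsubη)
  have hne : (nhdsWithin (0:ℝ) (Ioc 0 η)).NeBot := by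
    rw [nhdsWithin_Ioc_eq_nhdsGT hηpos]
    infer_instance
  have heqf : f₁ =ᶠ[nhdsWithin (0:ℝ) (Ioc 0 η)] f₂ := by
    filter_upwards [self_mem_nhdsWithin] with t ht
    exact hIoc t ⟨ht.1, le_trans ht.2 (min_le_left _ _)⟩
  have h00 : f₁ 0 = f₂ 0 :=
    tendsto_nhds_unique ((tendsto_congr' heqf).mp ht1) ht2
  refine ⟨η, hηpos, fun t ht => ?_⟩
  rcases eq_or_lt_of_le ht.1 with h | h
  · rw [← h]; exact h00
  · exact hIoc t ⟨h, le_trans ht.2 (min_le_left _ _)⟩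
end
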